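/- arXiv:2103.03165 — 2 statements merged into one kernel-verified Lean document; each statement's English description precedes it below -/
import Mathlib

section
/- Let m ≥ 2 and let b_1, ..., b_m be integers with b_i ≥ 2, and let a_1 ≤ a_2 ≤ a_3 be positive integers with a_1 + a_2 + a_3 = b_1 + ... + b_m, a_3 ≤ m, and a_1 < m. Then there exist nonnegative integers c_{i,j} (for 1 ≤ i ≤ m, 1 ≤ j ≤ 3) such that: (1) for each i, c_{i,1} + c_{i,2} + c_{i,3} = b_i; (2) for each i, exactly two of c_{i,1}, c_{i,2}, c_{i,3} are nonzero (equivalently, each nonzero c_{i,j} satisfies 1 ≤ c_{i,j} ≤ b_i - 1 and there are exactly two of them); (3) for each j, c_{1,j} + ... + c_{m,j} = a_j. -/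
/-!
Induction on `m`. Join the `B_i` of largest valence `β` to the two largest targets, giving
`p = min (a 2 - 1) (β - 1)` to `A 2` and `β - p` to `A 1`. For `m ≥ 3` the reduced targets, once
re-sorted, satisfy the hypotheses again with `m - 1`: they stay positive because `a 0 ≤ m - 1`
forces `a 1 + a 2 ≥ β + 2`, and they are not all equal to `m - 1`, since that would force `β = 2`,
hence all valences `2` and a total valence `2 m ≠ 3 m - 1`. For `m = 2` only three cases remain.
-/

open Finset

section

variable {ι κ : Type*} [Fintype ι] [Fintype κ]

/-- `c i j` is the number of edges between `B_i` (of valence `b i`) and `A_j`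
(of valence `a j`) in a bipartite multigraph where each `B_i` is joined to exactly two `A_j`. -/
structure IsDistribution (b : ι → ℤ) (a : κ → ℤ) (c : ι → κ → ℤ) : Prop where
  nonneg : ∀ i j, 0 ≤ c i j
  sum_row : ∀ i, ∑ j, c i j = b i
  card_ne_zero : ∀ i, #{j | c i j ≠ 0} = 2
  sum_col : ∀ j, ∑ i, c i j = a j

namespace IsDistribution

variable {b : ι → ℤ} {a : κ → ℤ} {c : ι → κ → ℤ}

theorem comp_equiv {κ' : Type*} [Fintype κ'] (h : IsDistribution b a c) (e : κ' ≃ κ) :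
    IsDistribution b (a ∘ e) (fun i => c i ∘ e) where
  nonneg i j := h.nonneg i (e j)
  sum_row i := (e.sum_comp (c i)).trans (h.sum_row i)
  card_ne_zero i := (card_equiv e (by simp)).trans (h.card_ne_zero i)
  sum_col j := h.sum_col (e j)

theorem insertNth {n : ℕ} {b : Fin n → ℤ} {c : Fin n → κ → ℤ} (h : IsDistribution b a c)
    (p : Fin (n + 1)) {r : κ → ℤ} (hr : ∀ j, 0 ≤ r j) (hr₂ : #{j | r j ≠ 0} = 2) :
    IsDistribution (p.insertNth (∑ j, r j) b) (a + r) (p.insertNth r c) where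
  nonneg i j := by
    induction i using p.succAboveCases <;> simp [hr, h.nonneg]
  sum_row i := by
    induction i using p.succAboveCases <;> simp [h.sum_row]
  card_ne_zero i := by
    induction i using p.succAboveCases <;> simp [hr₂, h.card_ne_zero]
  sum_col j := by
    simp [Fin.sum_univ_succAbove _ p, h.sum_col, add_comm]

end IsDistribution

end

theorem exists_isDistribution_of_sorted {n : ℕ} {b : Fin n → ℤ}
    (H : ∀ {a : Fin 3 → ℤ}, a 0 ≤ a 1 → a 1 ≤ a 2 → 0 < a 0 → a 2 ≤ n → a 0 < n →
      ∑ j, a j = ∑ i, b i → ∃ c, IsDistribution b a c)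
    {a : Fin 3 → ℤ} (ha : ∀ j, 0 < a j) (han : ∀ j, a j ≤ n) (hlt : ∃ j, a j < n)
    (hsum : ∑ j, a j = ∑ i, b i) : ∃ c, IsDistribution b a c := by
  set σ := Tuple.sort a
  have hmono : Monotone (a ∘ σ) := Tuple.monotone_sort a
  obtain ⟨j, hj⟩ := hlt
  have hmin : (a ∘ σ) 0 < n :=
    (hmono (Fin.zero_le (σ.symm j))).trans_lt (by simpa using hj)
  obtain ⟨c, hc⟩ := H (hmono (by decide)) (hmono (by decide)) (ha _) (han _) hmin
    ((Equiv.sum_comp σ a).trans hsum)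
  refine ⟨fun i => c i ∘ σ.symm, ?_⟩
  convert hc.comp_equiv σ.symm
  ext
  simp

theorem exists_isDistribution_two {b : Fin 2 → ℤ} (hb : ∀ i, 2 ≤ b i) {a : Fin 3 → ℤ}
    (h01 : a 0 ≤ a 1) (h12 : a 1 ≤ a 2) (ha0 : 0 < a 0) (ha2 : a 2 ≤ 2) (hlt : a 0 < 2)
    (hsum : ∑ j, a j = ∑ i, b i) : ∃ c, IsDistribution b a c := by
  have hb0 := hb 0
  have hb1 := hb 1
  rw [Fin.sum_univ_two, Fin.sum_univ_three] at hsum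
  obtain ⟨x, y, rfl⟩ : ∃ x y, b = ![x, y] := ⟨b 0, b 1, by ext i; fin_cases i <;> rfl⟩
  obtain ⟨u, v, w, rfl⟩ : ∃ u v w, a = ![u, v, w] :=
    ⟨a 0, a 1, a 2, by ext j; fin_cases j <;> rfl⟩
  simp only [Fin.isValue, Matrix.cons_val] at *
  have : u = 1 ∧ (v = 1 ∧ w = 2 ∧ x = 2 ∧ y = 2 ∨
      v = 2 ∧ w = 2 ∧ (x = 3 ∧ y = 2 ∨ x = 2 ∧ y = 3)) := by omega
  rcases this with ⟨rfl, ⟨rfl, rfl, rfl, rfl⟩ | ⟨rfl, rfl, ⟨rfl, rfl⟩ | ⟨rfl, rfl⟩⟩⟩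
  · exact ⟨![![1, 0, 1], ![0, 1, 1]], by decide, by decide, by decide, by decide⟩
  · exact ⟨![![0, 1, 2], ![1, 1, 0]], by decide, by decide, by decide, by decide⟩
  · exact ⟨![![1, 1, 0], ![0, 1, 2]], by decide, by decide, by decide, by decide⟩

theorem exists_isDistribution_succ {n : ℕ} (hn : 2 ≤ n)
    (ih : ∀ {b : Fin n → ℤ}, (∀ i, 2 ≤ b i) → ∀ {a : Fin 3 → ℤ}, a 0 ≤ a 1 → a 1 ≤ a 2 →
      0 < a 0 → a 2 ≤ n → a 0 < n → ∑ j, a j = ∑ i, b i → ∃ c, IsDistribution b a c)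
    {b : Fin (n + 1) → ℤ} (hb : ∀ i, 2 ≤ b i) {a : Fin 3 → ℤ}
    (h01 : a 0 ≤ a 1) (h12 : a 1 ≤ a 2) (ha0 : 0 < a 0) (ha2 : a 2 ≤ n + 1) (hlt : a 0 < n + 1)
    (hsum : ∑ j, a j = ∑ i, b i) : ∃ c, IsDistribution b a c := by
  obtain ⟨i₀, -, hmax⟩ := exists_max_image univ b univ_nonempty
  set b' := i₀.removeNth b
  have hsplit : b i₀ + ∑ i, b' i = ∑ i, b i := Fin.add_sum_removeNth i₀ b
  have hlower : ∑ _i : Fin n, (2 : ℤ) ≤ ∑ i, b' i := sum_le_sum fun i _ => hb _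
  have hupper : ∑ i, b' i ≤ ∑ _i : Fin n, b i₀ := sum_le_sum fun i _ => hmax _ (mem_univ _)
  simp only [sum_const, card_univ, Fintype.card_fin, nsmul_eq_mul] at hlower hupper
  have hupper₂ : b i₀ = 2 → ∑ i, b' i ≤ 2 * n := fun h => by rw [h] at hupper; linarith
  have hβ := hb i₀
  rw [Fin.sum_univ_three] at hsum
  set p := min (a 2 - 1) (b i₀ - 1)
  set q := b i₀ - p
  have hq : 0 < q := by omega
  have hp : 0 < p := by omega
  obtain ⟨c, hc⟩ := exists_isDistribution_of_sorted (ih (b := b') fun i => hb _)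
    (a := ![a 0, a 1 - q, a 2 - p])
    (by simp only [Fin.forall_fin_succ, IsEmpty.forall_iff, Matrix.cons_val_zero,
      Matrix.cons_val_succ, and_true]; omega)
    (by simp only [Fin.forall_fin_succ, IsEmpty.forall_iff, Matrix.cons_val_zero,
      Matrix.cons_val_succ, and_true]; omega)
    (by
      have : a 0 < n ∨ a 1 - q < n ∨ a 2 - p < n := by omega
      rcases this with h | h | h
      exacts [⟨0, h⟩, ⟨1, h⟩, ⟨2, h⟩])
    (by simp only [Fin.sum_univ_three, Fin.isValue, Matrix.cons_val]; omega)
  refine ⟨i₀.insertNth ![0, q, p] c, ?_⟩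
  convert hc.insertNth i₀ (r := ![0, q, p])
    (by simp only [Fin.forall_fin_succ, IsEmpty.forall_iff, Matrix.cons_val_zero,
      Matrix.cons_val_succ, and_true]; omega)
    (card_eq_two.2 ⟨1, 2, by decide, by ext j; fin_cases j <;> simp [hp.ne', hq.ne']⟩)
  · rw [show ∑ j, ![0, q, p] j = b i₀ by simp [Fin.sum_univ_three, q],
      Fin.insertNth_self_removeNth]
  · ext j
    fin_cases j <;> simp [q]

theorem exists_isDistribution {m : ℕ} {b : Fin m → ℤ} (hb : ∀ i, 2 ≤ b i) {a : Fin 3 → ℤ}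
    (h01 : a 0 ≤ a 1) (h12 : a 1 ≤ a 2) (ha0 : 0 < a 0) (ha2 : a 2 ≤ m) (hlt : a 0 < m)
    (hsum : ∑ j, a j = ∑ i, b i) : ∃ c, IsDistribution b a c := by
  have hm : 2 ≤ m := by omega
  induction m, hm using Nat.le_induction generalizing a with
  | base => exact exists_isDistribution_two hb h01 h12 ha0 (mod_cast ha2) (mod_cast hlt) hsum
  | succ n hn ih =>
    exact exists_isDistribution_succ hn ih hb h01 h12 ha0 (mod_cast ha2) (mod_cast hlt) hsum

theorem stmt2_general (m : ℕ) (b : Fin m → ℤ) (hb : ∀ i, 2 ≤ b i)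
    (a : Fin 3 → ℤ) (ha : ∀ j, 0 < a j) (hmono : a 0 ≤ a 1 ∧ a 1 ≤ a 2)
    (hsum : a 0 + a 1 + a 2 = ∑ i, b i) (ha3 : a 2 ≤ (m : ℤ)) (ha1 : a 0 < (m : ℤ)) :
    ∃ c : Fin m → Fin 3 → ℤ, (∀ i j, 0 ≤ c i j) ∧
      (∀ i, c i 0 + c i 1 + c i 2 = b i) ∧
      (∀ i, (Finset.univ.filter fun j => c i j ≠ 0).card = 2) ∧
      (∀ j, ∑ i, c i j = a j) := by
  obtain ⟨c, hc⟩ := exists_isDistribution hb hmono.1 hmono.2 (ha 0) ha3 ha1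
    (by rwa [Fin.sum_univ_three])
  exact ⟨c, hc.nonneg, fun i => by rw [← Fin.sum_univ_three, hc.sum_row], hc.card_ne_zero,
    hc.sum_col⟩

/-- Combinatorial distribution lemma for three zeros. -/
theorem stmt2 (m : ℕ) (hm : 2 ≤ m) (b : Fin m → ℤ) (hb : ∀ i, 2 ≤ b i)
    (a : Fin 3 → ℤ) (ha : ∀ j, 0 < a j) (hmono : a 0 ≤ a 1 ∧ a 1 ≤ a 2)
    (hsum : a 0 + a 1 + a 2 = ∑ i, b i) (ha3 : a 2 ≤ (m : ℤ)) (ha1 : a 0 < (m : ℤ)) :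
    ∃ c : Fin m → Fin 3 → ℤ, (∀ i j, 0 ≤ c i j) ∧
      (∀ i, c i 0 + c i 1 + c i 2 = b i) ∧
      (∀ i, (Finset.univ.filter fun j => c i j ≠ 0).card = 2) ∧
      (∀ j, ∑ i, c i j = a j) :=
  stmt2_general m b hb a ha hmono hsum ha3 ha1
end

section
/- Let T be a finite bipartite tree with parts A and B, with positive real vertex weights having equal totals on A and B, and let f be its unique balanced flow (the edge function summing at each vertex to that vertex's weight). Then f is strictly positive on all edges if and only if the following leaf-stripping condition holds: whenever one repeatedly removes a leaf and subtracts its weight from the weight of its unique neighbor (performing between one and (number of edges) - 1 such removals in any order), all resulting vertex weights remain strictly positive. -/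
attribute [local instance] Classical.propDecidable

open Finset

/-- `f` is a balanced flow on the graph `G` with vertex weights `w`. -/
def IsBalancedFlow {V : Type} [Fintype V] (G : SimpleGraph V) (w : V → ℝ)
    (f : Sym2 V → ℝ) : Prop :=
  ∀ v : V, ∑ e ∈ Finset.univ.filter (fun e : Sym2 V => e ∈ G.edgeSet ∧ v ∈ e), f e = w v

/-- A state of the leaf-stripping process: the set of remaining vertices together
with the current weights. -/
abbrev FlowState (V : Type) := Finset V × (V → ℝ)

/-- One leaf-stripping step: remove a vertex `v` having exactly one neighbour `u`
among the remaining vertices, and subtract its weight from that of `u`. -/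
def LeafStep {V : Type} (G : SimpleGraph V) (p q : FlowState V) : Prop :=
  ∃ v u, v ∈ p.1 ∧ u ∈ p.1 ∧ (∀ z ∈ p.1, (G.Adj v z ↔ z = u)) ∧
    q.1 = p.1.erase v ∧ q.2 = Function.update p.2 u (p.2 u - p.2 v)

/-- `LeafSteps G k p q`: `q` is obtained from `p` by exactly `k` leaf-stripping steps. -/
def LeafSteps {V : Type} (G : SimpleGraph V) : ℕ → FlowState V → FlowState V → Prop
  | 0, p, q => p = q
  | n + 1, p, q => ∃ r, LeafStep G p r ∧ LeafSteps G n r q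

/-!
Stripping a leaf `v` with neighbour `u` from the current vertex set `S` preserves two
invariants: `S` stays connected inside the tree, and the weight of each remaining vertex is
the sum of `f` over the edges of `G` at that vertex with both ends in `S` (the leaf carries
`f s(v, u)`, exactly what `u` loses). So if `f > 0`, all weights stay positive while at least
two vertices remain. Conversely, for an edge `ab`, repeatedly stripping a vertex of
`S \ {a, b}` farthest from `a`, which is a leaf of `S`, ends at `{a, b}`, where the weight of
`a` is `f s(a, b)`.
-/

namespace SimpleGraph

variable {V : Type} {G : SimpleGraph V}

def IsPreconnectedOn (G : SimpleGraph V) (S : Finset V) : Prop :=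
  ∀ x ∈ S, ∀ y ∈ S, ∃ p : G.Walk x y, ∀ z ∈ p.support, z ∈ S

/-- A walk inside `S` ending away from the leaf `v` of `S` can be rerouted to avoid `v`;
if it starts at `v` it is rerouted to start at the neighbour `u` instead. -/
lemma exists_walk_erase_leaf {S : Finset V} {v u : V} (hleaf : ∀ z ∈ S, G.Adj v z ↔ z = u) :
    ∀ {x y : V} (p : G.Walk x y), (∀ z ∈ p.support, z ∈ S) → y ≠ v →
      ∃ q : G.Walk (if x = v then u else x) y, ∀ z ∈ q.support, z ∈ S.erase v
  | x, _, .nil, hp, hy => by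
    rw [if_neg hy]
    exact ⟨.nil, by simpa using ⟨hy, hp x (by simp)⟩⟩
  | x, y, .cons (v := z) hxz p, hp, hy => by
    have hxS : x ∈ S := hp x (by simp)
    have hzS : z ∈ S := hp z (by simp)
    obtain ⟨q, hq⟩ := exists_walk_erase_leaf hleaf p (fun t ht => hp t (by simp [ht])) hy
    by_cases hxv : x = v
    · subst hxv
      have hzu : z = u := (hleaf z hzS).mp hxz
      have hz : (if z = x then u else z) = if x = x then u else x := by
        simp [hzu]
      exact ⟨q.copy hz rfl, by simpa using hq⟩
    · by_cases hzv : z = v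
      · have hxu : x = u := (hleaf x hxS).mp (hzv ▸ hxz.symm)
        have hz : (if z = v then u else z) = if x = v then u else x := by
          simp [hxu, hzv]
        exact ⟨q.copy hz rfl, by simpa using hq⟩
      · have hz : (if z = v then u else z) = z := if_neg hzv
        refine ⟨(Walk.cons hxz (q.copy hz rfl)).copy (if_neg hxv).symm rfl, fun t ht => ?_⟩
        simp only [Walk.support_copy, Walk.support_cons, List.mem_cons] at ht
        rcases ht with rfl | ht
        · exact mem_erase.mpr ⟨hxv, hxS⟩
        · exact hq t ht

lemma IsPreconnectedOn.erase_leaf {S : Finset V} (hS : G.IsPreconnectedOn S) {v u : V}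
    (hleaf : ∀ z ∈ S, G.Adj v z ↔ z = u) : G.IsPreconnectedOn (S.erase v) := by
  intro x hx y hy
  obtain ⟨p, hp⟩ := hS x (mem_of_mem_erase hx) y (mem_of_mem_erase hy)
  obtain ⟨q, hq⟩ := exists_walk_erase_leaf hleaf p hp (ne_of_mem_erase hy)
  exact ⟨q.copy (if_neg (ne_of_mem_erase hx)) rfl, by simpa using hq⟩

lemma IsPreconnectedOn.exists_adj {S : Finset V} (hS : G.IsPreconnectedOn S) {v y : V}
    (hv : v ∈ S) (hy : y ∈ S) (hyv : y ≠ v) : ∃ z ∈ S, G.Adj v z := by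
  obtain ⟨p, hp⟩ := hS v hv y hy
  cases p with
  | nil => exact absurd rfl hyv
  | cons h q => exact ⟨_, hp _ (by simp), h⟩

lemma IsTree.eq_of_adj_of_dist_add_one (hG : G.IsTree) {a v z z' : V}
    (hz : G.Adj v z) (hz' : G.Adj v z')
    (hd : G.dist a z + 1 = G.dist a v) (hd' : G.dist a z' + 1 = G.dist a v) : z = z' := by
  obtain ⟨p, hp, -⟩ := hG.connected.exists_path_of_dist a v
  suffices key : ∀ t, G.Adj v t → G.dist a t + 1 = G.dist a v → t = p.penultimate from
    (key z hz hd).trans (key z' hz' hd').symm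
  intro t ht hdt
  obtain ⟨q, hq, hql⟩ := hG.connected.exists_path_of_dist a t
  have hvq : v ∉ q.support := fun hv =>
    have := (dist_le (q.takeUntil v hv)).trans (q.length_takeUntil_le_length hv)
    by omega
  exact hG.isAcyclic.eq_penultimate_of_adj_end hp ht
    (hG.isAcyclic.mem_support_of_ne_mem_support_of_adj_of_isPath hp hq ht hvq)

lemma IsTree.exists_leaf_ne_of_adj (hG : G.IsTree) {S : Finset V} (hS : G.IsPreconnectedOn S)
    {a b : V} (ha : a ∈ S) (hb : b ∈ S) (hab : G.Adj a b) (h3 : 3 ≤ #S) :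
    ∃ v ∈ S, v ≠ a ∧ v ≠ b ∧ ∃ u ∈ S, ∀ z ∈ S, G.Adj v z ↔ z = u := by
  have hT : (S \ {a, b}).Nonempty := by
    rw [← card_pos]
    have := le_card_sdiff {a, b} S
    have := card_le_two (a := a) (b := b)
    omega
  obtain ⟨v, hvT, hvmax⟩ := (S \ {a, b}).exists_max_image (G.dist a) hT
  simp only [mem_sdiff, mem_insert, mem_singleton, not_or] at hvT hvmax
  obtain ⟨hvS, hva, hvb⟩ := hvT
  -- `v` is farthest from `a`, so its neighbours in `S` are all one step closer to `a`.
  have hparent : ∀ z ∈ S, G.Adj v z → G.dist a z + 1 = G.dist a v := by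
    intro z hzS hvz
    rcases hG.dist_eq_dist_add_one_of_adj a hvz with h | h
    · omega
    · have hv0 := hG.connected.pos_dist_of_ne (Ne.symm hva)
      by_cases hza : z = a
      · subst hza; simp at h
      by_cases hzb : z = b
      · subst hzb; rw [dist_eq_one_iff_adj.mpr hab] at h; omega
      · have := hvmax z ⟨hzS, hza, hzb⟩; omega
  obtain ⟨u, huS, hvu⟩ := hS.exists_adj hvS ha (Ne.symm hva)
  refine ⟨v, hvS, hva, hvb, u, huS, fun z hzS => ⟨fun hvz => ?_, fun hzu => hzu ▸ hvu⟩⟩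
  exact hG.eq_of_adj_of_dist_add_one hvz hvu (hparent z hzS hvz) (hparent u huS hvu)

end SimpleGraph

section

open SimpleGraph

variable {V : Type} {G : SimpleGraph V}

def FlowState.MatchesFlow (G : SimpleGraph V) (f : Sym2 V → ℝ) (p : FlowState V) : Prop :=
  ∀ v ∈ p.1, p.2 v = ∑ z ∈ p.1 with G.Adj v z, f s(v, z)

lemma IsBalancedFlow.matchesFlow_univ [Fintype V] {w : V → ℝ} {f : Sym2 V → ℝ}
    (hf : IsBalancedFlow G w f) : FlowState.MatchesFlow G f (univ, w) := by
  intro v _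
  have hedges : univ.filter (fun e : Sym2 V => e ∈ G.edgeSet ∧ v ∈ e) =
      (univ.filter (G.Adj v)).image (fun z => s(v, z)) := by
    ext e
    induction e using Sym2.ind with
    | _ x y =>
      simp only [mem_filter, mem_univ, true_and, mem_image, mem_edgeSet, Sym2.mem_iff]
      constructor
      · rintro ⟨hxy, rfl | rfl⟩
        exacts [⟨y, hxy, rfl⟩, ⟨x, hxy.symm, Sym2.eq_swap⟩]
      · rintro ⟨z, hvz, hz⟩
        rcases Sym2.eq_iff.mp hz with ⟨rfl, rfl⟩ | ⟨rfl, rfl⟩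
        exacts [⟨hvz, .inl rfl⟩, ⟨hvz.symm, .inr rfl⟩]
  rw [show (univ, w).2 v = w v from rfl, ← hf v, hedges,
    sum_image fun x _ y _ h => Sym2.congr_right.mp h]

lemma FlowState.MatchesFlow.pos {f : Sym2 V → ℝ} (hpos : ∀ e ∈ G.edgeSet, 0 < f e)
    {p : FlowState V} (hf : p.MatchesFlow G f) (hS : G.IsPreconnectedOn p.1)
    (h2 : 2 ≤ #p.1) : ∀ v ∈ p.1, 0 < p.2 v := by
  intro v hv
  obtain ⟨y, hy, hyv⟩ := p.1.exists_mem_ne h2 v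
  obtain ⟨z, hz, hvz⟩ := hS.exists_adj hv hy hyv
  rw [hf v hv]
  exact sum_pos (fun t ht => hpos _ (mem_filter.mp ht).2)
    ⟨z, mem_filter.mpr ⟨hz, hvz⟩⟩

namespace LeafStep

variable {p q : FlowState V}

lemma card_add_one (h : LeafStep G p q) : #q.1 + 1 = #p.1 := by
  obtain ⟨v, -, hv, -, -, hq, -⟩ := h
  rw [hq, card_erase_add_one hv]

lemma isPreconnectedOn (h : LeafStep G p q) (hp : G.IsPreconnectedOn p.1) :
    G.IsPreconnectedOn q.1 := by
  obtain ⟨v, u, -, -, hleaf, hq, -⟩ := h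
  exact hq ▸ hp.erase_leaf hleaf

lemma matchesFlow {f : Sym2 V → ℝ} (h : LeafStep G p q) (hp : p.MatchesFlow G f) :
    q.MatchesFlow G f := by
  obtain ⟨v, u, hv, hu, hleaf, hq1, hq2⟩ := h
  intro z hz
  rw [hq1] at hz ⊢
  obtain ⟨hzv, hzS⟩ := mem_erase.mp hz
  rw [hq2, filter_erase]
  by_cases hzu : z = u
  · subst hzu
    have hv_nbrs : p.1.filter (G.Adj v) = {z} := by
      ext t
      simp only [mem_filter, mem_singleton]
      exact ⟨fun h => (hleaf t h.1).mp h.2, fun h => h ▸ ⟨hu, (hleaf z hu).mpr rfl⟩⟩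
    rw [Function.update_self, hp z hu, hp v hv, hv_nbrs, sum_singleton, sum_erase_eq_sub,
      Sym2.eq_swap]
    exact mem_filter.mpr ⟨hv, ((hleaf z hu).mpr rfl).symm⟩
  · have hvz : ¬ G.Adj z v := fun hzv' => hzu ((hleaf z hzS).mp hzv'.symm)
    rw [Function.update_of_ne hzu, hp z hzS, erase_eq_of_notMem (by simp [hvz])]

end LeafStep

namespace LeafSteps

lemma preserves {P : FlowState V → Prop} (hP : ∀ p q, LeafStep G p q → P p → P q) :
    ∀ {k : ℕ} {p q : FlowState V}, LeafSteps G k p q → P p → P q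
  | 0, _, _, h, hp => h ▸ hp
  | _ + 1, p, _, ⟨r, hr, h⟩, hp => preserves hP h (hP p r hr hp)

lemma card_add : ∀ {k : ℕ} {p q : FlowState V}, LeafSteps G k p q → #q.1 + k = #p.1
  | 0, _, _, h => h ▸ rfl
  | _ + 1, _, _, ⟨_, hr, h⟩ => by have := card_add h; have := hr.card_add_one; omega

end LeafSteps

lemma SimpleGraph.IsTree.exists_leafSteps_to_adj (hG : G.IsTree) {a b : V} (hab : G.Adj a b) :
    ∀ (k : ℕ) (S : Finset V), #S = k + 2 → G.IsPreconnectedOn S → a ∈ S → b ∈ S →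
      ∀ ω : V → ℝ, ∃ ω', LeafSteps G k (S, ω) ({a, b}, ω')
  | 0, S, hS2, _, ha, hb, ω => by
    refine ⟨ω, ?_⟩
    show (S, ω) = ({a, b}, ω)
    rw [(eq_of_subset_of_card_le (insert_subset ha (singleton_subset_iff.mpr hb))
      (by rw [card_pair hab.ne, hS2])).symm]
  | k + 1, S, hS3, hS, ha, hb, ω => by
    obtain ⟨v, hv, hva, hvb, u, hu, hleaf⟩ :=
      hG.exists_leaf_ne_of_adj hS ha hb hab (by omega)
    obtain ⟨ω', h⟩ := hG.exists_leafSteps_to_adj hab k (S.erase v)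
      (by rw [card_erase_of_mem hv, hS3]; rfl) (hS.erase_leaf hleaf)
      (mem_erase.mpr ⟨Ne.symm hva, ha⟩) (mem_erase.mpr ⟨Ne.symm hvb, hb⟩)
      (Function.update ω u (ω u - ω v))
    exact ⟨ω', _, ⟨v, u, hv, hu, hleaf, rfl, rfl⟩, h⟩

end

theorem stmt15_general {V : Type} [Fintype V] (G : SimpleGraph V) (hG : G.IsTree)
    (w : V → ℝ) (hw : ∀ v, 0 < w v)
    (f : Sym2 V → ℝ) (hf : IsBalancedFlow G w f) :
    (∀ e ∈ G.edgeSet, 0 < f e) ↔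
      (∀ k, 1 ≤ k → k ≤ G.edgeFinset.card - 1 →
        ∀ q : FlowState V, LeafSteps G k (Finset.univ, w) q → ∀ v ∈ q.1, 0 < q.2 v) := by
  have hflow {k q} (h : LeafSteps G k (univ, w) q) : q.MatchesFlow G f :=
    h.preserves (fun _ _ hs => hs.matchesFlow) hf.matchesFlow_univ
  have hconn : G.IsPreconnectedOn univ := fun x _ y _ =>
    ⟨(hG.connected x y).some, fun z _ => mem_univ z⟩
  have hcard : #G.edgeFinset + 1 = Fintype.card V := hG.card_edgeFinset
  constructor
  · intro hpos k hk1 hk2 q hq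
    have := hq.card_add
    rw [card_univ] at this
    exact (hflow hq).pos hpos (hq.preserves (fun _ _ hs => hs.isPreconnectedOn) hconn) (by omega)
  · intro hstrip e he
    induction e using Sym2.ind with
    | _ a b =>
    have hab : G.Adj a b := he
    have h2 : 2 ≤ Fintype.card V := Fintype.one_lt_card_iff.mpr ⟨a, b, hab.ne⟩
    obtain ⟨ω, hq⟩ := hG.exists_leafSteps_to_adj hab (Fintype.card V - 2) univ
      (by rw [card_univ]; omega) hconn (mem_univ a) (mem_univ b) w
    have hωa : 0 < ω a := by
      rcases Nat.eq_zero_or_pos (Fintype.card V - 2) with h0 | h0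
      · rw [h0] at hq
        obtain ⟨-, rfl⟩ := Prod.ext_iff.mp hq
        exact hw a
      · exact hstrip _ h0 (by omega) _ hq a (by simp)
    have hpair : ({a, b} : Finset V).filter (G.Adj a) = {b} := by
      simp [filter_insert, hab]
    have hωf : ω a = ∑ z ∈ ({a, b} : Finset V) with G.Adj a z, f s(a, z) :=
      hflow hq a (by simp)
    rwa [hωf, hpair, sum_singleton] at hωa

/-- On a finite bipartite tree with positive weights of equal totals, the balanced
flow is strictly positive on all edges iff every sequence of between `1` and
`#edges - 1` leaf-stripping steps keeps all weights strictly positive. -/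
theorem stmt15 {V : Type} [Fintype V] (G : SimpleGraph V) (hG : G.IsTree)
    (A : Set V) (hbip : ∀ u v, G.Adj u v → (u ∈ A ↔ v ∉ A))
    (w : V → ℝ) (hw : ∀ v, 0 < w v)
    (htot : ∑ v ∈ Finset.univ.filter (· ∈ A), w v =
      ∑ v ∈ Finset.univ.filter (· ∉ A), w v)
    (f : Sym2 V → ℝ) (hf : IsBalancedFlow G w f) :
    (∀ e ∈ G.edgeSet, 0 < f e) ↔
      (∀ k, 1 ≤ k → k ≤ G.edgeFinset.card - 1 →
        ∀ q : FlowState V, LeafSteps G k (Finset.univ, w) q → ∀ v ∈ q.1, 0 < q.2 v) :=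
  stmt15_general G hG w hw f hf
end
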